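/- Let B be Lorentzian of signature (1, n−1) on V, let (e₀,…,e_{n−1}) be a pseudo-orthonormal basis, let F be a nonzero p-form on V (1 ≤ p ≤ n−1) of type N with multiple null direction ℓ ≠ 0, and define S_F(x,y) := Σ_{a₁,…,a_{p−1}=0}^{n−1} ε_{a₁}⋯ε_{a_{p−1}} F(x, e_{a₁},…,e_{a_{p−1}}) F(y, e_{a₁},…,e_{a_{p−1}}). If v ∈ V satisfies B(v,v) = 0 and S_F(v,v) = 0, then v is a scalar multiple of ℓ. (This is the algebraic content of footnote 13: a null covector whose mixed invariant with a type N field strength vanishes must be proportional to the multiple null direction ℓ.) -/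

import Mathlib

open scoped BigOperators

/-- `ι_ℓ F = 0`: the interior product of the alternating form `F` with the vector `ℓ`
vanishes.  Since `F` is alternating, this is equivalent to saying that `F` vanishes
whenever one of its arguments equals `ℓ`. -/
def IotaZero {V : Type*} [AddCommGroup V] [Module ℝ V] {p : ℕ}
    (F : AlternatingMap ℝ V ℝ (Fin p)) (ℓ : V) : Prop :=
  ∀ v : Fin p → V, (∃ i, v i = ℓ) → F v = 0

/-- `ℓ♭ ∧ F = 0` with respect to the bilinear form `B`. -/
def WedgeFlatZero {V : Type*} [AddCommGroup V] [Module ℝ V] {p : ℕ}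
    (B : V →ₗ[ℝ] V →ₗ[ℝ] ℝ) (F : AlternatingMap ℝ V ℝ (Fin p)) (ℓ : V) : Prop :=
  ∀ v : Fin (p + 1) → V,
    ∑ i : Fin (p + 1), (-1 : ℝ) ^ (i : ℕ) * B ℓ (v i) * F (v ∘ i.succAbove) = 0

/-- `F` is of type N with multiple null direction `ℓ` (Definition 1.1). -/
def TypeN {V : Type*} [AddCommGroup V] [Module ℝ V] {p : ℕ}
    (B : V →ₗ[ℝ] V →ₗ[ℝ] ℝ) (F : AlternatingMap ℝ V ℝ (Fin p)) (ℓ : V) : Prop :=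
  IotaZero F ℓ ∧ WedgeFlatZero B F ℓ

/-- The signs `ε₀ = −1`, `ε_a = 1` for `a ≥ 1`. -/
def epsSign {n : ℕ} (a : Fin n) : ℝ := if (a : ℕ) = 0 then -1 else 1

/-- `e` is a pseudo-orthonormal basis for `B` of Lorentzian signature `(1, n−1)`. -/
def IsLorentzBasis {V : Type*} [AddCommGroup V] [Module ℝ V] {n : ℕ}
    (B : V →ₗ[ℝ] V →ₗ[ℝ] ℝ) (e : Module.Basis (Fin n) ℝ V) : Prop :=
  ∀ a b : Fin n, B (e a) (e b) = if a = b then epsSign a else 0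

/-!
The two type N conditions make `ℓ` null and force `B ℓ x = 0` for every `x` with `ι_x F = 0`.
Suppose `B ℓ v ≠ 0`. Then `s = ℓ - B ℓ v • v` is timelike and lies in `span {ℓ, v}`, on which
`G = ι_v F` vanishes in every slot. The mixed invariant `S_F(v, v)` is the pairing of `G` with
itself induced by `B`, which can be computed in any orthogonal basis. In an orthogonal basis
containing `s` every other vector is spacelike, so `S_F(v, v)` becomes a sum of squares and its
vanishing forces `G = 0`, whence `B ℓ v = 0` after all. Finally, two orthogonal null vectors in
Lorentzian signature are proportional.
-/

open Module

namespace LinearMap.IsOrthoᵢ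

variable {V ι κ : Type*} [AddCommGroup V] [Module ℝ V] [Fintype ι] [Fintype κ]
  {B : V →ₗ[ℝ] V →ₗ[ℝ] ℝ} {b : Basis ι ℝ V}

theorem sum_inv_mul_smul_eq (hb : B.IsOrthoᵢ b) (hb₀ : ∀ i, B (b i) (b i) ≠ 0) (x : V) :
    ∑ i, ((B (b i) (b i))⁻¹ * B (b i) x) • b i = x := by
  conv_rhs => rw [← b.sum_repr x]
  refine Finset.sum_congr rfl fun i _ => ?_
  have hcoord : B (b i) x = B (b i) (b i) * b.repr x i := by
    conv_lhs => rw [← b.sum_repr x]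
    simp only [map_sum, map_smul, smul_eq_mul]
    rw [Finset.sum_eq_single i (fun j _ hji => by rw [hb hji.symm, mul_zero]) (by simp)]
    ring
  rw [hcoord, inv_mul_cancel_left₀ (hb₀ i)]

/-- Both sides are the trace of `Φ` with respect to `B`. -/
theorem sum_inv_mul_apply_self_eq (hB : ∀ x y, B x y = B y x)
    (hb : B.IsOrthoᵢ b) (hb₀ : ∀ i, B (b i) (b i) ≠ 0)
    {b' : Basis κ ℝ V} (hb' : B.IsOrthoᵢ b') (hb'₀ : ∀ j, B (b' j) (b' j) ≠ 0)
    (Φ : V →ₗ[ℝ] V →ₗ[ℝ] ℝ) :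
    ∑ i, (B (b i) (b i))⁻¹ * Φ (b i) (b i) = ∑ j, (B (b' j) (b' j))⁻¹ * Φ (b' j) (b' j) := by
  calc ∑ i, (B (b i) (b i))⁻¹ * Φ (b i) (b i)
      = ∑ i, (B (b i) (b i))⁻¹ *
          Φ (∑ j, ((B (b' j) (b' j))⁻¹ * B (b' j) (b i)) • b' j) (b i) := by
        simp only [hb'.sum_inv_mul_smul_eq hb'₀]
    _ = ∑ j, (B (b' j) (b' j))⁻¹ *
          Φ (b' j) (∑ i, ((B (b i) (b i))⁻¹ * B (b i) (b' j)) • b i) := by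
        simp only [map_sum, map_smul, LinearMap.sum_apply, LinearMap.smul_apply, smul_eq_mul,
          Finset.mul_sum]
        rw [Finset.sum_comm]
        refine Finset.sum_congr rfl fun j _ => Finset.sum_congr rfl fun i _ => ?_
        rw [hB (b' j) (b i)]
        ring
    _ = ∑ j, (B (b' j) (b' j))⁻¹ * Φ (b' j) (b' j) := by
        simp only [hb.sum_inv_mul_smul_eq hb₀]

end LinearMap.IsOrthoᵢ

section Contraction

variable {V ι κ : Type*} [AddCommGroup V] [Module ℝ V] [Fintype ι] [Fintype κ]
  {B : V →ₗ[ℝ] V →ₗ[ℝ] ℝ}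

variable (B) in
/-- The pairing induced by `B` on `p`-linear forms, computed in an orthogonal basis `b`. For a
pseudo-orthonormal basis `e`, `contraction B e p (ι_v F) (ι_v F)` is the mixed invariant
`S_F(v, v)`. -/
noncomputable def contraction (b : ι → V) (p : ℕ) :
    MultilinearMap ℝ (fun _ : Fin p => V) ℝ →ₗ[ℝ]
      MultilinearMap ℝ (fun _ : Fin p => V) ℝ →ₗ[ℝ] ℝ :=
  LinearMap.mk₂ ℝ
    (fun G H => ∑ a : Fin p → ι,
      (∏ i, (B (b (a i)) (b (a i)))⁻¹) * (G (fun i => b (a i)) * H (fun i => b (a i))))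
    (fun _ _ _ => by simp only [add_apply, add_mul, mul_add, Finset.sum_add_distrib])
    (fun _ _ _ => by
      simp only [smul_apply, smul_eq_mul, Finset.mul_sum]
      exact Finset.sum_congr rfl fun _ _ => by ring)
    (fun _ _ _ => by simp only [add_apply, mul_add, Finset.sum_add_distrib])
    (fun _ _ _ => by
      simp only [smul_apply, smul_eq_mul, Finset.mul_sum]
      exact Finset.sum_congr rfl fun _ _ => by ring)

theorem contraction_apply (b : ι → V) {p : ℕ}
    (G H : MultilinearMap ℝ (fun _ : Fin p => V) ℝ) :
    contraction B b p G H = ∑ a : Fin p → ι,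
      (∏ i, (B (b (a i)) (b (a i)))⁻¹) * (G (fun i => b (a i)) * H (fun i => b (a i))) :=
  rfl

theorem contraction_succ (b : ι → V) {p : ℕ}
    (G H : MultilinearMap ℝ (fun _ : Fin (p + 1) => V) ℝ) :
    contraction B b (p + 1) G H =
      ∑ i, (B (b i) (b i))⁻¹ * contraction B b p (G.curryLeft (b i)) (H.curryLeft (b i)) := by
  rw [contraction_apply, ← (Fin.consEquiv fun _ => ι).sum_comp, Fintype.sum_prod_type]
  refine Finset.sum_congr rfl fun i _ => ?_
  rw [contraction_apply, Finset.mul_sum]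
  refine Finset.sum_congr rfl fun a _ => ?_
  have hcons : (fun j => b ((Fin.cons i a : Fin (p + 1) → ι) j)) =
      Fin.cons (b i) fun j => b (a j) :=
    Fin.comp_cons b i a
  simp only [Fin.consEquiv_apply, Fin.prod_univ_succ, Fin.cons_zero, Fin.cons_succ,
    MultilinearMap.curryLeft_apply, hcons]
  ring

theorem contraction_eq_of_isOrthoᵢ (hB : ∀ x y, B x y = B y x)
    {b : Basis ι ℝ V} (hb : B.IsOrthoᵢ b) (hb₀ : ∀ i, B (b i) (b i) ≠ 0)
    {b' : Basis κ ℝ V} (hb' : B.IsOrthoᵢ b') (hb'₀ : ∀ j, B (b' j) (b' j) ≠ 0) (p : ℕ) :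
    contraction B b p = contraction B b' p := by
  induction p with
  | zero =>
    ext G H
    simp only [contraction_apply, Finset.univ_eq_empty, Finset.prod_empty, one_mul,
      Fintype.sum_unique]
    congr!
  | succ p ih =>
    ext G H
    rw [contraction_succ, contraction_succ, ih]
    exact hb.sum_inv_mul_apply_self_eq hB hb₀ hb' hb'₀
      ((contraction B b' p).compl₁₂ G.curryLeft H.curryLeft)

theorem eq_zero_of_contraction_self_eq_zero {b : Basis ι ℝ V} {p : ℕ}
    {G : MultilinearMap ℝ (fun _ : Fin p => V) ℝ}
    (hG : ∀ a : Fin p → ι, G (fun i => b (a i)) = 0 ∨ ∀ i, 0 < B (b (a i)) (b (a i)))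
    (h : contraction B b p G G = 0) : G = 0 := by
  have hterm : ∀ a : Fin p → ι, G (fun i => b (a i)) ≠ 0 →
      0 < (∏ i, (B (b (a i)) (b (a i)))⁻¹) * (G (fun i => b (a i)) * G (fun i => b (a i))) :=
    fun a ha => mul_pos (Finset.prod_pos fun i _ => inv_pos.mpr ((hG a).resolve_left ha i))
      (mul_self_pos.mpr ha)
  have hnonneg : ∀ a ∈ (Finset.univ : Finset (Fin p → ι)),
      0 ≤ (∏ i, (B (b (a i)) (b (a i)))⁻¹) * (G (fun i => b (a i)) * G (fun i => b (a i))) := by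
    intro a _
    by_cases ha : G (fun i => b (a i)) = 0
    · simp [ha]
    · exact (hterm a ha).le
  rw [contraction_apply, Finset.sum_eq_zero_iff_of_nonneg hnonneg] at h
  refine Basis.ext_multilinear (fun _ => b) fun a => ?_
  by_contra ha
  exact (hterm a ha).ne' (h a (Finset.mem_univ a))

end Contraction

theorem epsSign_mul_self {n : ℕ} (a : Fin n) : epsSign a * epsSign a = 1 := by
  unfold epsSign
  split_ifs <;> norm_num

theorem Module.Basis.neZero_of_ne_zero {V : Type*} [AddCommGroup V] [Module ℝ V] {n : ℕ}
    (e : Basis (Fin n) ℝ V) {x : V} (hx : x ≠ 0) : NeZero n :=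
  have := nontrivial_of_ne x 0 hx
  NeZero.of_pos (Fin.pos_iff_nonempty.mpr e.index_nonempty)

namespace IsLorentzBasis

variable {V : Type*} [AddCommGroup V] [Module ℝ V] {n : ℕ} {B : V →ₗ[ℝ] V →ₗ[ℝ] ℝ}
  {e : Basis (Fin n) ℝ V}

theorem apply_eq_sum (he : IsLorentzBasis B e) (x y : V) :
    B x y = ∑ a, epsSign a * (e.repr x a * e.repr y a) := by
  conv_lhs => rw [← e.sum_repr x, ← e.sum_repr y]
  simp only [map_sum, map_smul, LinearMap.sum_apply, LinearMap.smul_apply, smul_eq_mul,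
    he _ _, mul_ite, mul_zero, Finset.sum_ite_eq', Finset.mem_univ, if_true]
  exact Finset.sum_congr rfl fun a _ => by ring

theorem symm (he : IsLorentzBasis B e) (x y : V) : B x y = B y x := by
  simp only [he.apply_eq_sum, mul_comm (e.repr x _)]

theorem isOrthoᵢ (he : IsLorentzBasis B e) : B.IsOrthoᵢ e :=
  fun a b hab => (he a b).trans (if_neg hab)

theorem inv_apply_self (he : IsLorentzBasis B e) (a : Fin n) :
    (B (e a) (e a))⁻¹ = epsSign a := by
  rw [he, if_pos rfl, inv_eq_of_mul_eq_one_right (epsSign_mul_self a)]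

theorem apply_self_ne_zero (he : IsLorentzBasis B e) (a : Fin n) : B (e a) (e a) ≠ 0 := by
  rw [he, if_pos rfl]
  exact left_ne_zero_of_mul_eq_one (epsSign_mul_self a)

theorem contraction_eq_sum (he : IsLorentzBasis B e) {p : ℕ}
    (G H : MultilinearMap ℝ (fun _ : Fin p => V) ℝ) :
    contraction B e p G H = ∑ a : Fin p → Fin n,
      (∏ i, epsSign (a i)) * (G (fun i => e (a i)) * H (fun i => e (a i))) := by
  simp only [contraction_apply, he.inv_apply_self]

theorem apply_self_pos_of_repr_zero [NeZero n] (he : IsLorentzBasis B e) {x : V}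
    (hx₀ : e.repr x 0 = 0) (hx : x ≠ 0) : 0 < B x x := by
  have hsq : ∀ a, epsSign a * (e.repr x a * e.repr x a) = e.repr x a * e.repr x a := by
    intro a
    by_cases ha : (a : ℕ) = 0
    · rw [show a = 0 from Fin.ext ha, hx₀]
      ring
    · simp [epsSign, ha]
  obtain ⟨a, ha⟩ : ∃ a, e.repr x a ≠ 0 := by
    by_contra! h
    exact hx (e.repr.map_eq_zero_iff.mp (Finsupp.ext h))
  rw [he.apply_eq_sum, Finset.sum_congr rfl fun a _ => hsq a]
  exact Finset.sum_pos' (fun a _ => mul_self_nonneg _) ⟨a, Finset.mem_univ a, mul_self_pos.mpr ha⟩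

theorem apply_self_pos_of_apply_eq_zero (he : IsLorentzBasis B e) {s w : V} (hs : B s s < 0)
    (hsw : B s w = 0) (hw : w ≠ 0) : 0 < B w w := by
  have : NeZero n := e.neZero_of_ne_zero hw
  have hs₀ : e.repr s 0 ≠ 0 := fun h0 => by
    by_cases hs0 : s = 0
    · simp [hs0] at hs
    · exact (he.apply_self_pos_of_repr_zero h0 hs0).not_gt hs
  -- `w - c • s` has no `e 0`-component, hence is spacelike unless it vanishes
  set c := e.repr w 0 / e.repr s 0
  have hx₀ : e.repr (w - c • s) 0 = 0 := by
    simp only [map_sub, map_smul, Finsupp.sub_apply, Finsupp.smul_apply, smul_eq_mul, c]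
    field_simp
    ring
  have hxx : B (w - c • s) (w - c • s) = B w w + c ^ 2 * B s s := by
    simp only [map_sub, map_smul, LinearMap.sub_apply, LinearMap.smul_apply, smul_eq_mul,
      he.symm w s, hsw]
    ring
  by_cases hx : w - c • s = 0
  · have hc : c = 0 := by
      have := congrArg (B s) hx
      simp only [map_sub, map_smul, smul_eq_mul, hsw, map_zero] at this
      nlinarith
    exact absurd (by simpa [hc] using hx) hw
  · have := he.apply_self_pos_of_repr_zero hx₀ hx
    nlinarith [sq_nonneg c]

theorem exists_eq_smul_of_apply_eq_zero (he : IsLorentzBasis B e) {ℓ v : V} (hℓ : ℓ ≠ 0)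
    (hℓℓ : B ℓ ℓ = 0) (hvv : B v v = 0) (hℓv : B ℓ v = 0) : ∃ c : ℝ, v = c • ℓ := by
  have : NeZero n := e.neZero_of_ne_zero hℓ
  have hℓ₀ : e.repr ℓ 0 ≠ 0 := fun h0 => (he.apply_self_pos_of_repr_zero h0 hℓ).ne' hℓℓ
  have hz : e.repr ℓ 0 • v - e.repr v 0 • ℓ = 0 := by
    by_contra hz
    refine (he.apply_self_pos_of_repr_zero ?_ hz).ne' ?_
    · simp only [map_sub, map_smul, Finsupp.sub_apply, Finsupp.smul_apply, smul_eq_mul]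
      ring
    · simp only [map_sub, map_smul, LinearMap.sub_apply, LinearMap.smul_apply, smul_eq_mul,
        he.symm v ℓ, hℓℓ, hvv, hℓv]
      ring
  refine ⟨e.repr v 0 / e.repr ℓ 0, ?_⟩
  rw [div_eq_inv_mul, mul_smul, ← sub_eq_zero.mp hz, inv_smul_smul₀ hℓ₀]

theorem exists_isOrthoᵢ_basis_of_timelike (he : IsLorentzBasis B e) {s : V} (hs : B s s < 0) :
    ∃ (ι : Type) (_ : Fintype ι) (b : Basis ι ℝ V),
      B.IsOrthoᵢ b ∧ ∀ i, b i = s ∨ 0 < B (b i) (b i) := by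
  have : FiniteDimensional ℝ V := e.finiteDimensional_of_finite
  set U := LinearMap.ker (B s)
  obtain ⟨u, hu⟩ := LinearMap.BilinForm.exists_orthogonal_basis
    (B := B.domRestrict₁₂ U U) ⟨fun x y => he.symm x y⟩
  set g : Option (Fin (finrank ℝ U)) → V := fun i => i.elim s fun k => u k
  have hu_ker : ∀ k, B s (u k) = 0 := fun k => (u k).2
  have hortho : B.IsOrthoᵢ g := by
    rintro (_ | k) (_ | k') h
    · exact absurd rfl h
    · exact hu_ker k'
    · exact (he.symm _ _).trans (hu_ker k)
    · exact hu (fun h' => h (congrArg some h'))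
  have hpos : ∀ k, 0 < B (g (some k)) (g (some k)) := fun k =>
    he.apply_self_pos_of_apply_eq_zero hs (hu_ker k) fun h => u.ne_zero k (Subtype.ext h)
  have hanis : ∀ i, B (g i) (g i) ≠ 0
    | none => hs.ne
    | some k => (hpos k).ne'
  have hcard : Fintype.card (Option (Fin (finrank ℝ U))) = finrank ℝ V := by
    rw [Fintype.card_option, Fintype.card_fin]
    exact Module.Dual.finrank_ker_add_one_of_ne_zero fun h => hs.ne (by simp [h])
  refine ⟨_, inferInstance, basisOfLinearIndependentOfCardEqFinrank'
    g (LinearMap.linearIndependent_of_isOrthoᵢ hortho hanis) hcard, ?_, ?_⟩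
  · simpa using hortho
  · rintro (_ | k)
    · simp [g]
    · simpa using Or.inr (hpos k)

end IsLorentzBasis

section TypeN

variable {V : Type*} [AddCommGroup V] [Module ℝ V] {B : V →ₗ[ℝ] V →ₗ[ℝ] ℝ} {p : ℕ}
  {F : AlternatingMap ℝ V ℝ (Fin (p + 1))} {ℓ : V}

theorem IotaZero.apply_cons_eq_zero_of_mem_span (h : IotaZero F ℓ) (v : V) {m : Fin p → V}
    {i : Fin p} (hi : m i ∈ Submodule.span ℝ {ℓ, v}) : F (Fin.cons v m) = 0 := by
  set φ : V →ₗ[ℝ] ℝ := (F.toMultilinearMap.curryLeft v).toLinearMap m i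
  have hφ : Submodule.span ℝ {ℓ, v} ≤ LinearMap.ker φ := by
    refine Submodule.span_le.mpr ?_
    rintro x (rfl | rfl)
    · exact h _ ⟨i.succ, by simp⟩
    · exact F.map_eq_zero_of_eq _ (i := 0) (j := i.succ) (by simp) (Fin.succ_ne_zero i).symm
  simpa [φ] using hφ hi

theorem WedgeFlatZero.apply_eq_zero_of_curryLeft_eq_zero (h : WedgeFlatZero B F ℓ)
    (hF : F ≠ 0) {x : V} (hx : F.toMultilinearMap.curryLeft x = 0) : B ℓ x = 0 := by
  obtain ⟨w, hw⟩ : ∃ w, F w ≠ 0 := by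
    by_contra! hw
    exact hF (AlternatingMap.ext hw)
  have hx' : ∀ u : Fin (p + 1) → V, u 0 = x → F u = 0 := fun u hu => by
    rw [← Fin.cons_self_tail u, hu]
    exact congrArg (fun G => G (Fin.tail u)) hx
  have hsum := h (Fin.cons x w)
  rw [Fin.sum_univ_succ, Finset.sum_eq_zero fun j _ => ?_] at hsum
  · simpa [hw] using hsum
  · rw [hx' _ (by simp), mul_zero]

theorem TypeN.apply_self_eq_zero (hN : TypeN B F ℓ) (hF : F ≠ 0) : B ℓ ℓ = 0 :=
  hN.2.apply_eq_zero_of_curryLeft_eq_zero hF (by ext m; exact hN.1 _ ⟨0, rfl⟩)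

theorem TypeN.apply_eq_zero_of_contraction_eq_zero {n : ℕ} {e : Basis (Fin n) ℝ V}
    (he : IsLorentzBasis B e) (hN : TypeN B F ℓ) (hF : F ≠ 0) {v : V} (hv : B v v = 0)
    (hS : contraction B e p (F.toMultilinearMap.curryLeft v)
      (F.toMultilinearMap.curryLeft v) = 0) :
    B ℓ v = 0 := by
  by_contra hc
  set s := ℓ - B ℓ v • v
  have hs : B s s < 0 := by
    have hss : B s s = -(2 * B ℓ v ^ 2) := by
      simp only [s, map_sub, map_smul, LinearMap.sub_apply, LinearMap.smul_apply, smul_eq_mul,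
        hN.apply_self_eq_zero hF, hv, he.symm v ℓ]
      ring
    rw [hss]
    exact neg_neg_of_pos (by positivity)
  have hs_mem : s ∈ Submodule.span ℝ {ℓ, v} :=
    Submodule.sub_mem _ (Submodule.subset_span (by simp))
      (Submodule.smul_mem _ _ (Submodule.subset_span (by simp)))
  obtain ⟨ι, _, b, hb, hbs⟩ := he.exists_isOrthoᵢ_basis_of_timelike hs
  have hb₀ : ∀ i, B (b i) (b i) ≠ 0 := fun i =>
    (hbs i).elim (fun h => h ▸ hs.ne) fun h => h.ne'
  refine hc (hN.2.apply_eq_zero_of_curryLeft_eq_zero hF ?_)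
  refine eq_zero_of_contraction_self_eq_zero (B := B) (b := b) (fun a => ?_) ?_
  · by_cases h : ∃ i, b (a i) = s
    · obtain ⟨i, hi⟩ := h
      exact Or.inl (hN.1.apply_cons_eq_zero_of_mem_span v (i := i) (hi ▸ hs_mem))
    · exact Or.inr fun i => (hbs (a i)).resolve_left (not_exists.mp h i)
  · rwa [← contraction_eq_of_isOrthoᵢ he.symm he.isOrthoᵢ he.apply_self_ne_zero hb hb₀]

end TypeN

theorem null_vector_with_vanishing_mixed_invariant_is_aligned_general {V : Type*}
    [AddCommGroup V] [Module ℝ V] {n : ℕ}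
    (B : V →ₗ[ℝ] V →ₗ[ℝ] ℝ)
    (e : Module.Basis (Fin n) ℝ V) (he : IsLorentzBasis B e)
    {p : ℕ}
    (F : AlternatingMap ℝ V ℝ (Fin (p + 1))) (hF : F ≠ 0)
    {ℓ : V} (hℓ : ℓ ≠ 0) (hN : TypeN B F ℓ)
    (v : V) (hv : B v v = 0)
    (hS : ∑ a : Fin p → Fin n, (∏ i : Fin p, epsSign (a i)) *
        (F (Fin.cons v (fun i => e (a i)))) ^ 2 = 0) :
    ∃ c : ℝ, v = c • ℓ := by
  have hS' : contraction B e p (F.toMultilinearMap.curryLeft v)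
      (F.toMultilinearMap.curryLeft v) = 0 := by
    simpa only [he.contraction_eq_sum, MultilinearMap.curryLeft_apply,
      AlternatingMap.coe_multilinearMap, ← sq] using hS
  exact he.exists_eq_smul_of_apply_eq_zero hℓ (hN.apply_self_eq_zero hF) hv
    (hN.apply_eq_zero_of_contraction_eq_zero he hF hv hS')

/-- footnote 13: if `F` is a nonzero type N `(p+1)`-form (i.e. a `p`-form
with `p ≥ 1`, written here with arity `p + 1`, `p + 1 ≤ n − 1`) with multiple null
direction `ℓ ≠ 0`, and `v` is a null vector whose mixed invariant
`S_F(v,v) = Σ ε_{a₁}⋯ε_{a_p} F(v, e_{a₁},…,e_{a_p})²` vanishes, then `v ∝ ℓ`. -/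
theorem null_vector_with_vanishing_mixed_invariant_is_aligned {V : Type*}
    [AddCommGroup V] [Module ℝ V] [FiniteDimensional ℝ V] {n : ℕ}
    (B : V →ₗ[ℝ] V →ₗ[ℝ] ℝ)
    (e : Module.Basis (Fin n) ℝ V) (he : IsLorentzBasis B e)
    {p : ℕ} (hpn : p + 1 ≤ n - 1)
    (F : AlternatingMap ℝ V ℝ (Fin (p + 1))) (hF : F ≠ 0)
    {ℓ : V} (hℓ : ℓ ≠ 0) (hN : TypeN B F ℓ)
    (v : V) (hv : B v v = 0)
    (hS : ∑ a : Fin p → Fin n, (∏ i : Fin p, epsSign (a i)) *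
        (F (Fin.cons v (fun i => e (a i)))) ^ 2 = 0) :
    ∃ c : ℝ, v = c • ℓ :=
  null_vector_with_vanishing_mixed_invariant_is_aligned_general B e he F hF hℓ hN v hv hS
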